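/- Let m ≥ 1 and suppose A = A⁰ ⊕ A¹ is a ℤ₂-graded algebra with A¹ ≠ 0 over a field of characteristic zero. Then the Grassmann envelope G_m(A) is not a semiprime algebra. -/

import Mathlib

open scoped TensorProduct

noncomputable section

variable (F : Type*) [Field F]

/-- Grassmann (exterior) algebra on generators indexed by `ι`. -/
abbrev Grass (ι : Type*) := ExteriorAlgebra F (ι →₀ F)

/-- The parity (ℤ₂) grading of the Grassmann algebra. -/
def grassPart (ι : Type*) (i : ZMod 2) : Submodule F (Grass F ι) :=
  CliffordAlgebra.evenOdd (0 : QuadraticForm F (ι →₀ F)) i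

/-- The augmentation ideal of the Grassmann algebra: elements with zero constant term. -/
def grassStar (ι : Type*) : Submodule F (Grass F ι) :=
  LinearMap.ker (ExteriorAlgebra.algebraMapInv (M := ι →₀ F)).toLinearMap

/-- The image of `p ⊗ q` inside `A ⊗[F] B`. -/
def tensSub {A B : Type*} [Ring A] [Ring B] [Algebra F A] [Algebra F B]
    (p : Submodule F A) (q : Submodule F B) : Submodule F (A ⊗[F] B) :=
  LinearMap.range (TensorProduct.map p.subtype q.subtype)

/-- The Grassmann envelope `A⁰ ⊗ G⁰ ⊕ A¹ ⊗ G¹` of a ℤ₂-graded algebra. -/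
def grassEnv (A : Type*) [Ring A] [Algebra F A] (𝒜 : ZMod 2 → Submodule F A)
    (ι : Type*) : Submodule F (A ⊗[F] Grass F ι) :=
  tensSub F (𝒜 0) (grassPart F ι 0) ⊔ tensSub F (𝒜 1) (grassPart F ι 1)

/-- The Grassmann envelope without constant terms `(G*)⁰ ⊗ A⁰ ⊕ (G*)¹ ⊗ A¹`. -/
def grassEnvStar (A : Type*) [Ring A] [Algebra F A] (𝒜 : ZMod 2 → Submodule F A)
    (ι : Type*) : Submodule F (A ⊗[F] Grass F ι) :=
  tensSub F (𝒜 0) (grassStar F ι ⊓ grassPart F ι 0) ⊔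
    tensSub F (𝒜 1) (grassStar F ι ⊓ grassPart F ι 1)



/-!
If `ω = e₁ ∧ ⋯ ∧ eₘ` is the top form of `G_m`, then `g ω = ω g = ε(g) ω` for the augmentation
`ε : G_m → F`, since `v ∧ ω = 0` for every vector `v`. Hence the line `Fω` is killed on both
sides by the augmentation ideal, which contains `G¹` and, for `m ≥ 1`, `ω` itself. With `p` the
parity of `m`, the subspace `A^p ⊗ Fω` of the envelope is therefore a two-sided ideal of square
zero. It is nonzero because `A^p ≠ 0`: `A⁰ ∋ 1 ≠ 0` and `A¹ ≠ 0`.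
-/

namespace ExteriorAlgebra

section CommRing

variable {R M : Type*} [CommRing R] [AddCommGroup M] [Module R M]

lemma ι_eq_ιMulti_one (v : M) : ι R v = ιMulti R 1 ![v] := by
  simp

lemma algebraMapInv_ιMulti {n : ℕ} (hn : n ≠ 0) (v : Fin n → M) :
    algebraMapInv (ιMulti R n v) = 0 := by
  obtain ⟨k, rfl⟩ := Nat.exists_eq_succ_of_ne_zero hn
  simp [ιMulti_succ_apply, algebraMapInv]

lemma ιMulti_mem_evenOdd {n : ℕ} (v : Fin n → M) :
    ιMulti R n v ∈ CliffordAlgebra.evenOdd (0 : QuadraticForm R M) n :=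
  Submodule.mem_iSup_of_mem ⟨n, rfl⟩ (ιMulti_range R n ⟨v, rfl⟩)

lemma evenOdd_one_le_ker_algebraMapInv :
    CliffordAlgebra.evenOdd (0 : QuadraticForm R M) 1 ≤
      LinearMap.ker (algebraMapInv (R := R) (M := M)).toLinearMap := by
  refine iSup_le fun ⟨n, hn⟩ => ?_
  obtain ⟨k, rfl⟩ : ∃ k, n = k + 1 :=
    Nat.exists_eq_add_one.mpr (Nat.pos_of_ne_zero (by rintro rfl; simp at hn))
  rw [pow_succ, Submodule.mul_le]
  rintro x - _ ⟨v, rfl⟩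
  simp [algebraMapInv]

end CommRing

variable {M : Type*} [AddCommGroup M] [Module F M]

lemma ιMulti_eq_zero_of_finrank_lt [Module.Finite F M] {k : ℕ} (v : Fin k → M)
    (hk : Module.finrank F M < k) : ιMulti F k v = 0 :=
  (ιMulti F k).map_linearDependent v fun hv =>
    hk.not_ge (by simpa using hv.fintype_card_le_finrank)

section TopDegree

variable [Module.Finite F M] {n : ℕ} (f : Fin n → M)

lemma ι_mul_ιMulti_of_finrank_le (hn : Module.finrank F M ≤ n) (v : M) :
    ι F v * ιMulti F n f = 0 := by
  rw [ι_eq_ιMulti_one, ιMulti_mul_ιMulti]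
  exact ιMulti_eq_zero_of_finrank_lt F _ (by omega)

lemma ιMulti_mul_ι_of_finrank_le (hn : Module.finrank F M ≤ n) (v : M) :
    ιMulti F n f * ι F v = 0 := by
  rw [ι_eq_ιMulti_one, ιMulti_mul_ιMulti]
  exact ιMulti_eq_zero_of_finrank_lt F _ (by omega)

lemma mul_ιMulti_of_finrank_le (hn : Module.finrank F M ≤ n) (g : ExteriorAlgebra F M) :
    g * ιMulti F n f = algebraMapInv g • ιMulti F n f := by
  induction g using ExteriorAlgebra.induction with
  | algebraMap r => simp [Algebra.smul_def]
  | ι v => simp [ι_mul_ιMulti_of_finrank_le F f hn, algebraMapInv]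
  | mul a b ha hb => rw [mul_assoc, hb, mul_smul_comm, ha, smul_smul, map_mul, mul_comm]
  | add a b ha hb => rw [add_mul, ha, hb, map_add, add_smul]

lemma ιMulti_mul_of_finrank_le (hn : Module.finrank F M ≤ n) (g : ExteriorAlgebra F M) :
    ιMulti F n f * g = algebraMapInv g • ιMulti F n f := by
  induction g using ExteriorAlgebra.induction with
  | algebraMap r => simp [Algebra.smul_def, Algebra.commutes]
  | ι v => simp [ιMulti_mul_ι_of_finrank_le F f hn, algebraMapInv]
  | mul a b ha hb => rw [← mul_assoc, ha, smul_mul_assoc, hb, smul_smul, map_mul]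
  | add a b ha hb => rw [mul_add, ha, hb, map_add, add_smul]

end TopDegree

/-- The lift of `Pi.single n b.det` sends `ιMulti F n b` to `b.det b = 1`. -/
lemma ιMulti_basis_ne_zero {n : ℕ} (b : Module.Basis (Fin n) F M) : ιMulti F n b ≠ 0 := by
  classical
  intro h
  exact b.det_ne_zero <| by
    simpa [liftAlternating_apply_ιMulti] using congrArg (liftAlternating (Pi.single n b.det)) h

end ExteriorAlgebra

lemma TensorProduct.tmul_ne_zero {M N : Type*} [AddCommGroup M] [Module F M] [AddCommGroup N]
    [Module F N] {x : M} {y : N} (hx : x ≠ 0) (hy : y ≠ 0) : x ⊗ₜ[F] y ≠ 0 := by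
  obtain ⟨φ, hφ⟩ := Module.Projective.exists_dual_ne_zero F hx
  obtain ⟨ψ, hψ⟩ := Module.Projective.exists_dual_ne_zero F hy
  intro h
  have := congrArg (fun t => TensorProduct.lid F F (TensorProduct.map φ ψ t)) h
  simp only [TensorProduct.map_tmul, TensorProduct.lid_tmul, smul_eq_mul, map_zero] at this
  exact mul_ne_zero hφ hψ this

section TensSub

variable {A B : Type*} [Ring A] [Ring B] [Algebra F A] [Algebra F B]

lemma tmul_mem_tensSub {p : Submodule F A} {q : Submodule F B} {a : A} {b : B}
    (ha : a ∈ p) (hb : b ∈ q) : a ⊗ₜ[F] b ∈ tensSub F p q :=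
  ⟨(⟨a, ha⟩ : p) ⊗ₜ[F] (⟨b, hb⟩ : q), TensorProduct.map_tmul _ _ _ _⟩

lemma tensSub_le {p : Submodule F A} {q : Submodule F B} {r : Submodule F (A ⊗[F] B)}
    (h : ∀ a ∈ p, ∀ b ∈ q, a ⊗ₜ[F] b ∈ r) : tensSub F p q ≤ r := by
  rw [tensSub, TensorProduct.range_map_eq_span_tmul, Submodule.span_le]
  rintro _ ⟨a, b, rfl⟩
  exact h a a.2 b b.2

lemma tensSub_mono {p p' : Submodule F A} {q q' : Submodule F B} (hp : p ≤ p') (hq : q ≤ q') :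
    tensSub F p q ≤ tensSub F p' q' :=
  tensSub_le F fun _ ha _ hb => tmul_mem_tensSub F (hp ha) (hq hb)

@[simp]
lemma tensSub_bot_right (p : Submodule F A) : tensSub F p (⊥ : Submodule F B) = ⊥ :=
  le_bot_iff.mp <| tensSub_le F fun _ _ b hb => by simp [(Submodule.mem_bot F).mp hb]

lemma tensSub_mul_tensSub_le (p p' : Submodule F A) (q q' : Submodule F B) :
    tensSub F p q * tensSub F p' q' ≤ tensSub F (p * p') (q * q') := by
  rw [tensSub, tensSub, TensorProduct.range_map_eq_span_tmul,
    TensorProduct.range_map_eq_span_tmul, Submodule.span_mul_span, Submodule.span_le]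
  rintro _ ⟨_, ⟨a, b, rfl⟩, _, ⟨a', b', rfl⟩, rfl⟩
  change (a : A) ⊗ₜ[F] (b : B) * ((a' : A) ⊗ₜ[F] (b' : B)) ∈ _
  rw [Algebra.TensorProduct.tmul_mul_tmul]
  exact tmul_mem_tensSub F (Submodule.mul_mem_mul a.2 a'.2) (Submodule.mul_mem_mul b.2 b'.2)

lemma tensSub_mul_tensSub_eq_bot (p p' : Submodule F A) {q q' : Submodule F B}
    (hq : q * q' = ⊥) : tensSub F p q * tensSub F p' q' = ⊥ :=
  eq_bot_mono (tensSub_mul_tensSub_le F p p' q q') (by simp [hq])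

end TensSub

section Envelope

variable {A : Type*} [Ring A] [Algebra F A] (𝒜 : ZMod 2 → Submodule F A) {ι : Type*}

lemma tensSub_le_grassEnv (i : ZMod 2) {q : Submodule F (Grass F ι)}
    (hq : q ≤ grassPart F ι i) : tensSub F (𝒜 i) q ≤ grassEnv F A 𝒜 ι := by
  fin_cases i
  · exact le_sup_of_le_left (tensSub_mono F le_rfl hq)
  · exact le_sup_of_le_right (tensSub_mono F le_rfl hq)

variable [SetLike.GradedMonoid 𝒜]

lemma grassEnv_mul_tensSub_le (i : ZMod 2) {q : Submodule F (Grass F ι)}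
    (h0 : grassPart F ι 0 * q ≤ q) (h1 : grassPart F ι 1 * q = ⊥) :
    grassEnv F A 𝒜 ι * tensSub F (𝒜 i) q ≤ tensSub F (𝒜 i) q := by
  rw [grassEnv, Submodule.sup_mul, tensSub_mul_tensSub_eq_bot F _ _ h1, sup_bot_eq]
  refine (tensSub_mul_tensSub_le F _ _ _ _).trans (tensSub_mono F ?_ h0)
  exact Submodule.mul_le.mpr fun _ hx _ hy => by simpa using SetLike.mul_mem_graded hx hy

lemma tensSub_mul_grassEnv_le (i : ZMod 2) {q : Submodule F (Grass F ι)}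
    (h0 : q * grassPart F ι 0 ≤ q) (h1 : q * grassPart F ι 1 = ⊥) :
    tensSub F (𝒜 i) q * grassEnv F A 𝒜 ι ≤ tensSub F (𝒜 i) q := by
  rw [grassEnv, Submodule.mul_sup, tensSub_mul_tensSub_eq_bot F _ _ h1, sup_bot_eq]
  refine (tensSub_mul_tensSub_le F _ _ _ _).trans (tensSub_mono F ?_ h0)
  exact Submodule.mul_le.mpr fun _ hx _ hy => by simpa using SetLike.mul_mem_graded hx hy

end Envelope

lemma grassPart_one_le_grassStar (ι : Type*) : grassPart F ι 1 ≤ grassStar F ι :=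
  ExteriorAlgebra.evenOdd_one_le_ker_algebraMapInv

section GrassTop

variable (m : ℕ)

def grassTop : Grass F (Fin m) :=
  ExteriorAlgebra.ιMulti F m (Finsupp.basisSingleOne : Module.Basis (Fin m) F (Fin m →₀ F))

lemma grassTop_ne_zero : grassTop F m ≠ 0 :=
  ExteriorAlgebra.ιMulti_basis_ne_zero F _

lemma grassTop_mem_grassPart : grassTop F m ∈ grassPart F (Fin m) m :=
  ExteriorAlgebra.ιMulti_mem_evenOdd _

lemma mul_grassTop (g : Grass F (Fin m)) :
    g * grassTop F m = ExteriorAlgebra.algebraMapInv g • grassTop F m :=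
  ExteriorAlgebra.mul_ιMulti_of_finrank_le F _ (by simp) g

lemma grassTop_mul (g : Grass F (Fin m)) :
    grassTop F m * g = ExteriorAlgebra.algebraMapInv g • grassTop F m :=
  ExteriorAlgebra.ιMulti_mul_of_finrank_le F _ (by simp) g

lemma mul_span_grassTop_le (S : Submodule F (Grass F (Fin m))) :
    S * Submodule.span F {grassTop F m} ≤ Submodule.span F {grassTop F m} := by
  refine Submodule.mul_le.mpr fun g _ w hw => ?_
  obtain ⟨c, rfl⟩ := Submodule.mem_span_singleton.mp hw
  rw [mul_smul_comm, mul_grassTop]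
  exact Submodule.smul_mem _ _ (Submodule.smul_mem _ _ (Submodule.mem_span_singleton_self _))

lemma span_grassTop_mul_le (S : Submodule F (Grass F (Fin m))) :
    Submodule.span F {grassTop F m} * S ≤ Submodule.span F {grassTop F m} := by
  refine Submodule.mul_le.mpr fun w hw g _ => ?_
  obtain ⟨c, rfl⟩ := Submodule.mem_span_singleton.mp hw
  rw [smul_mul_assoc, grassTop_mul]
  exact Submodule.smul_mem _ _ (Submodule.smul_mem _ _ (Submodule.mem_span_singleton_self _))

lemma mul_span_grassTop_eq_bot {S : Submodule F (Grass F (Fin m))}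
    (hS : S ≤ grassStar F (Fin m)) :
    S * Submodule.span F {grassTop F m} = ⊥ := by
  refine le_bot_iff.mp (Submodule.mul_le.mpr fun g hg w hw => ?_)
  obtain ⟨c, rfl⟩ := Submodule.mem_span_singleton.mp hw
  have hg0 : ExteriorAlgebra.algebraMapInv g = 0 := hS hg
  simp [mul_grassTop, hg0]

lemma span_grassTop_mul_eq_bot {S : Submodule F (Grass F (Fin m))}
    (hS : S ≤ grassStar F (Fin m)) :
    Submodule.span F {grassTop F m} * S = ⊥ := by
  refine le_bot_iff.mp (Submodule.mul_le.mpr fun w hw g hg => ?_)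
  obtain ⟨c, rfl⟩ := Submodule.mem_span_singleton.mp hw
  have hg0 : ExteriorAlgebra.algebraMapInv g = 0 := hS hg
  simp [grassTop_mul, hg0]

lemma span_grassTop_le_grassStar (hm : m ≠ 0) :
    Submodule.span F {grassTop F m} ≤ grassStar F (Fin m) :=
  (Submodule.span_singleton_le_iff_mem _ _).mpr (ExteriorAlgebra.algebraMapInv_ιMulti hm _)

end GrassTop

lemma exists_mem_ne_zero_of_odd_ne_bot {A : Type*} [Ring A] [Algebra F A]
    (𝒜 : ZMod 2 → Submodule F A) [SetLike.GradedOne 𝒜] (h : 𝒜 1 ≠ ⊥) (i : ZMod 2) :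
    ∃ a ∈ 𝒜 i, a ≠ 0 := by
  obtain ⟨x, hx, hx0⟩ := (Submodule.ne_bot_iff _).mp h
  have : Nontrivial A := ⟨⟨x, 0, hx0⟩⟩
  fin_cases i
  · exact ⟨1, SetLike.one_mem_graded 𝒜, one_ne_zero⟩
  · exact ⟨x, hx, hx0⟩

theorem grassEnv_not_semiprime
    (A : Type*) [Ring A] [Algebra F A]
    (𝒜 : ZMod 2 → Submodule F A) [GradedAlgebra 𝒜]
    (m : ℕ) (hm : 1 ≤ m) (hA1 : 𝒜 1 ≠ ⊥) :
    ∃ I : Submodule F (A ⊗[F] Grass F (Fin m)),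
      I ≤ grassEnv F A 𝒜 (Fin m) ∧ I ≠ ⊥ ∧
      grassEnv F A 𝒜 (Fin m) * I ≤ I ∧ I * grassEnv F A 𝒜 (Fin m) ≤ I ∧
      I * I = ⊥ := by
  set L := Submodule.span F {grassTop F m}
  have hL : L ≤ grassStar F (Fin m) := span_grassTop_le_grassStar F m (by omega)
  have hodd := grassPart_one_le_grassStar F (Fin m)
  obtain ⟨a, ha, ha0⟩ := exists_mem_ne_zero_of_odd_ne_bot F 𝒜 hA1 m
  refine ⟨tensSub F (𝒜 m) L, ?_, ?_, ?_, ?_, ?_⟩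
  · exact tensSub_le_grassEnv F 𝒜 _ ((Submodule.span_singleton_le_iff_mem _ _).mpr
      (grassTop_mem_grassPart F m))
  · exact (Submodule.ne_bot_iff _).mpr
      ⟨_, tmul_mem_tensSub F ha (Submodule.mem_span_singleton_self _),
        TensorProduct.tmul_ne_zero F ha0 (grassTop_ne_zero F m)⟩
  · exact grassEnv_mul_tensSub_le F 𝒜 _ (mul_span_grassTop_le F m _)
      (mul_span_grassTop_eq_bot F m hodd)
  · exact tensSub_mul_grassEnv_le F 𝒜 _ (span_grassTop_mul_le F m _)
      (span_grassTop_mul_eq_bot F m hodd)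
  · exact tensSub_mul_tensSub_eq_bot F _ _ (mul_span_grassTop_eq_bot F m hL)
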